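/- Corollary (line graphs): Let H be a simple undirected graph and let G be the line graph of H, having n ≥ 1 vertices (one vertex per edge of H, two vertices adjacent iff the corresponding edges of H share an endpoint). Viewing G as an undirected side information graph, the clique covering scheme approximates the broadcast rate within a multiplicative factor of n^{2/3}; that is, χ(Ḡ) ≤ n^{2/3} · β(G). -/

import Mathlib

/-- A `(t, r)` index code for the side-information relation `E` on vertex type `V`:
an edge `i → j` (i.e., `E i j`) means that receiver `j` has message `i` as side
information.  Messages are `t`-bit strings `Fin t → Bool`, the broadcast index is an
`r`-bit string `Fin r → Bool`, and every receiver `j` can recover its message `x j`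
from the index and its side information. -/
structure IndexCode {V : Type*} (E : V → V → Prop) (t r : ℕ) where
  enc : (V → (Fin t → Bool)) → (Fin r → Bool)
  dec : ∀ j : V, (Fin r → Bool) → (({i : V // E i j}) → (Fin t → Bool)) → (Fin t → Bool)
  correct : ∀ (x : V → (Fin t → Bool)) (j : V),
    dec j (enc x) (fun i => x i.1) = x j

/-- The broadcast rate `β = inf { r / t : a (t, r) index code exists }`. -/
noncomputable def broadcastRate {V : Type*} (E : V → V → Prop) : ℝ :=
  sInf { q : ℝ | ∃ t r : ℕ, 0 < t ∧ Nonempty (IndexCode E t r) ∧ q = (r : ℝ) / t }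

/-!
Write `G` for the line graph of `H` and `α` for its independence number. An independent set
`S` of `G` forces `β(G) ≥ |S|`: the messages on `S` can be varied freely without changing the
side information of any receiver in `S`. An independent set of `G` is a matching of `H`; the at
most `2 α` endpoints of a maximum one cover every edge of `H`, and colouring each edge by a
covering endpoint gives `χ(Ḡ) ≤ 2 α`. Together with `χ(Ḡ) ≤ n` this yields `χ(Ḡ)³ ≤ n² α³`,
except when `α = 1`; then `G` is complete and `χ(Ḡ) ≤ 1`.
-/
open Finset

namespace IndexCode

variable {V : Type*} {E : V → V → Prop} {t r : ℕ}

noncomputable def uncoded [Fintype V] (E : V → V → Prop) : IndexCode E 1 (Fintype.card V) where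
  enc x k := x ((Fintype.equivFin V).symm k) 0
  dec j b _ _ := b (Fintype.equivFin V j)
  correct x j := by
    funext i
    simp [Subsingleton.elim i 0]

theorem eq_of_enc_eq (c : IndexCode E t r) {x x' : V → Fin t → Bool}
    (h : c.enc x = c.enc x') {j : V} (hside : ∀ i, E i j → x i = x' i) : x j = x' j := by
  rw [← c.correct x j, ← c.correct x' j, h]
  congr 1
  funext i
  exact hside i.1 i.2

/-- The messages on `S` can be chosen freely without changing the side information of any
receiver in `S`, so the index must separate all `2 ^ (t * #S)` choices. -/
theorem mul_card_le (c : IndexCode E t r) (S : Finset V) (hS : ∀ i ∈ S, ∀ j ∈ S, ¬ E i j) :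
    t * #S ≤ r := by
  classical
  let extend (y : S → Fin t → Bool) (v : V) : Fin t → Bool :=
    if h : v ∈ S then y ⟨v, h⟩ else fun _ => false
  have hinj : Function.Injective (c.enc ∘ extend) := by
    intro y y' h
    funext j
    have hside : ∀ i, E i j → extend y i = extend y' i := fun i hi => by
      have hiS : i ∉ S := fun hiS => hS i hiS j j.2 hi
      simp [extend, hiS]
    simpa [extend] using c.eq_of_enc_eq h hside
  have hcard := Fintype.card_le_of_injective _ hinj
  simp only [Fintype.card_fun, Fintype.card_bool, Fintype.card_fin, Fintype.card_coe,
    ← pow_mul] at hcard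
  exact (Nat.pow_le_pow_iff_right one_lt_two).mp hcard

end IndexCode

theorem le_broadcastRate {V : Type*} [Fintype V] {E : V → V → Prop} {a : ℝ}
    (h : ∀ t r, 0 < t → IndexCode E t r → a * t ≤ r) : a ≤ broadcastRate E := by
  refine le_csInf ⟨_, 1, _, one_pos, ⟨IndexCode.uncoded E⟩, rfl⟩ ?_
  rintro _ ⟨t, r, ht, ⟨c⟩, rfl⟩
  rw [le_div_iff₀ (by exact_mod_cast ht)]
  exact h t r ht c

namespace SimpleGraph

variable {V : Type*}

theorem indepNum_le_broadcastRate [Fintype V] (G : SimpleGraph V) :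
    (G.indepNum : ℝ) ≤ broadcastRate G.Adj := by
  obtain ⟨S, hS⟩ := G.maximumIndepSet_exists
  rw [← G.maximumIndepSet_card_eq_indepNum S hS]
  refine le_broadcastRate fun t r _ c => ?_
  have hindep : ∀ i ∈ S, ∀ j ∈ S, ¬ G.Adj i j := fun i hi j hj hij =>
    hS.isIndepSet (mem_coe.2 hi) (mem_coe.2 hj) hij.ne hij
  rw [mul_comm]
  exact_mod_cast c.mul_card_le S hindep

theorem Colorable.toNat_chromaticNumber_le {G : SimpleGraph V} {n : ℕ} (h : G.Colorable n) :
    G.chromaticNumber.toNat ≤ n :=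
  ENat.toNat_le_of_le_natCast h.chromaticNumber_le

theorem colorable_compl_one_of_indepNum_le_one [Finite V] {G : SimpleGraph V}
    (h : G.indepNum ≤ 1) : Gᶜ.Colorable 1 := by
  classical
  rw [colorable_one_iff, eq_bot_iff_forall_not_adj]
  intro a b hab
  have hpair : Gᶜ.IsClique (({a, b} : Finset V) : Set V) := by
    rw [coe_pair]
    exact isClique_pair.2 fun _ => hab
  have := hpair.card_le_cliqueNum
  rw [cliqueNum_compl, card_pair hab.ne] at this
  omega

theorem exists_adj_of_maximal_isIndepSet {G : SimpleGraph V} {s : Set V}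
    (hs : Maximal G.IsIndepSet s) (v : V) : v ∈ s ∨ ∃ w ∈ s, G.Adj v w := by
  by_contra! hv
  have hins : G.IsIndepSet (insert v s) :=
    Set.pairwise_insert.2 ⟨hs.1, fun w hw _ => ⟨hv.2 w hw, fun h => hv.2 w hw h.symm⟩⟩
  exact hv.1 (hs.2 hins (Set.subset_insert v s) (Set.mem_insert v s))

/-- Colour each edge by an endpoint in the cover: edges of the same colour share a vertex. -/
theorem colorable_compl_lineGraph_of_isVertexCover (H : SimpleGraph V) (C : Finset V)
    (hC : H.IsVertexCover C) : H.lineGraphᶜ.Colorable #C := by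
  have hmeet : ∀ e : H.edgeSet, ∃ v ∈ C, v ∈ (e : Sym2 V) := by
    rintro ⟨e, he⟩
    induction e using Sym2.ind with
    | h a b =>
      rcases hC he with ha | hb
      · exact ⟨a, ha, Sym2.mem_mk_left a b⟩
      · exact ⟨b, hb, Sym2.mem_mk_right a b⟩
  choose col hcolC hcol using hmeet
  let coloring : H.lineGraphᶜ.Coloring C :=
    Coloring.mk (fun e => ⟨col e, hcolC e⟩) fun {e f} hef hcolef => by
      rw [compl_adj] at hef
      have hsame : col e = col f := congrArg Subtype.val hcolef
      exact hef.2 (lineGraph_adj_iff_exists.2 ⟨hef.1, col e, hcol e, hsame ▸ hcol f⟩)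
  simpa using coloring.colorable

/-- A maximum independent set of the line graph is a maximal matching, whose endpoints cover
every edge. -/
theorem colorable_compl_lineGraph_two_mul_indepNum [Finite V] (H : SimpleGraph V) :
    H.lineGraphᶜ.Colorable (2 * H.lineGraph.indepNum) := by
  classical
  obtain ⟨S, hS⟩ := H.lineGraph.maximumIndepSet_exists
  let C : Finset V := S.biUnion fun e => (e : Sym2 V).toFinset
  have hCcard : #C ≤ 2 * #S :=
    calc #C ≤ ∑ e ∈ S, #(e : Sym2 V).toFinset := card_biUnion_le
      _ = ∑ _e ∈ S, 2 := sum_congr rfl fun e _ =>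
          Sym2.card_toFinset_of_not_isDiag _ (H.not_isDiag_of_mem_edgeSet e.2)
      _ = 2 * #S := by rw [sum_const, smul_eq_mul, mul_comm]
  have hcover : H.IsVertexCover C := by
    intro a b hab
    have hmem : ∀ v ∈ s(a, b), ∀ f ∈ S, v ∈ (f : Sym2 V) → a ∈ C ∨ b ∈ C := by
      intro v hv f hf hvf
      have hvC : v ∈ C := mem_biUnion.2 ⟨f, hf, Sym2.mem_toFinset.2 hvf⟩
      rcases Sym2.mem_iff.1 hv with rfl | rfl
      exacts [Or.inl hvC, Or.inr hvC]
    rcases exists_adj_of_maximal_isIndepSet (hS.isMaximalIndepSet S) ⟨s(a, b), hab⟩ with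
      he | ⟨f, hf, hadj⟩
    · exact hmem a (Sym2.mem_mk_left a b) _ he (Sym2.mem_mk_left a b)
    · obtain ⟨-, v, hv, hvf⟩ := lineGraph_adj_iff_exists.1 hadj
      exact hmem v hv f hf hvf
  rw [← H.lineGraph.maximumIndepSet_card_eq_indepNum S hS]
  exact (colorable_compl_lineGraph_of_isVertexCover H C hcover).mono hCcard

end SimpleGraph

theorem cube_le_sq_mul_cube {c n a : ℕ} (hcn : c ≤ n) (hca : c ≤ 2 * a)
    (hone : a ≤ 1 → c ≤ 1) : c ^ 3 ≤ n ^ 2 * a ^ 3 := by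
  rcases le_or_gt a 1 with ha | ha
  · have hc := hone ha
    interval_cases a <;> interval_cases c <;> simp_all [one_le_pow₀]
  · have h2a : 2 * a ≤ a ^ 3 := by nlinarith [pow_succ a 2, Nat.mul_le_mul ha ha]
    calc c ^ 3 = c * c * c := by ring
      _ ≤ n * n * (2 * a) := by gcongr
      _ ≤ n * n * a ^ 3 := by gcongr
      _ = n ^ 2 * a ^ 3 := by ring

theorem le_rpow_two_thirds_mul_of_cube_le {c n a : ℝ} (hn : 0 ≤ n) (ha : 0 ≤ a)
    (h : c ^ 3 ≤ n ^ 2 * a ^ 3) : c ≤ n ^ ((2 : ℝ) / 3) * a := by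
  have hcube : (n ^ ((2 : ℝ) / 3) * a) ^ 3 = n ^ 2 * a ^ 3 := by
    rw [mul_pow, ← Real.rpow_mul_natCast hn]
    norm_num
  exact le_of_pow_le_pow_left₀ three_ne_zero (by positivity) (hcube ▸ h)

theorem corollary_line_graph_general {V : Type*} [Fintype V]
    (H : SimpleGraph V) [DecidableRel H.Adj] :
    (((H.lineGraph)ᶜ.chromaticNumber.toNat : ℝ)) ≤
      (Fintype.card H.edgeSet : ℝ) ^ ((2 : ℝ) / 3) * broadcastRate H.lineGraph.Adj := by
  have hχn := H.lineGraphᶜ.colorable_of_fintype.toNat_chromaticNumber_le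
  have hχα := H.colorable_compl_lineGraph_two_mul_indepNum.toNat_chromaticNumber_le
  have hχ1 := fun h : H.lineGraph.indepNum ≤ 1 =>
    (SimpleGraph.colorable_compl_one_of_indepNum_le_one h).toNat_chromaticNumber_le
  calc _ ≤ (Fintype.card H.edgeSet : ℝ) ^ ((2 : ℝ) / 3) * H.lineGraph.indepNum :=
        le_rpow_two_thirds_mul_of_cube_le (by positivity) (by positivity)
          (by exact_mod_cast cube_le_sq_mul_cube hχn hχα hχ1)
    _ ≤ _ := mul_le_mul_of_nonneg_left H.lineGraph.indepNum_le_broadcastRate (by positivity)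

/-- **Corollary (line graphs).**  Let `G` be the line graph of a simple undirected graph
`H`, with `n ≥ 1` vertices (one per edge of `H`, two vertices adjacent iff the
corresponding edges of `H` share an endpoint).  Viewing `G` as an undirected side
information graph, the clique covering scheme approximates the broadcast rate within a
factor of `n^(2/3)`: `χ(Ḡ) ≤ n^(2/3) * β(G)`. -/
theorem corollary_line_graph {V : Type*} [Fintype V] [DecidableEq V]
    (H : SimpleGraph V) [DecidableRel H.Adj]
    (hn : 1 ≤ Fintype.card H.edgeSet) :
    (((H.lineGraph)ᶜ.chromaticNumber.toNat : ℝ)) ≤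
      (Fintype.card H.edgeSet : ℝ) ^ ((2 : ℝ) / 3) * broadcastRate H.lineGraph.Adj :=
  corollary_line_graph_general H
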